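/- Let f be uniformly convex on Q with parameters ρ ≥ 2 and μ(f) > 0, with all subgradients of f on Q bounded by L in dual norm, let x̄ ∈ Q, R > 0, and let x* be a minimizer of f over Q_R(x̄). Run dual averaging with constant stepsizes λ_i = 1 and gains β_i = γ√(N+1) for some γ > 0: x₀ = x̄, s₀ = 0, g_i ∈ ∂f(x_i), s_{i+1} = s_i + g_i, x_{i+1} a maximizer over Q_R(x̄) of x ↦ ⟨−s_{i+1}, x − x̄⟩ − β_{i+1} d_{x̄,R}(x), with output x_N(x̄,R) = (1/(N+1)) Σ_{i=0}^{N} x_i and gap value δ_N(x̄,R) = max_{x∈Q_R(x̄)} (1/(N+1)) Σ_{i=0}^{N} ⟨g_i, x_i − x⟩. Then: δ_N(x̄,R) ≤ (1/√(N+1)) (γ A(d) + L² R²/(2 γ μ(d))); f(x_N(x̄,R)) − f(x*) ≤ δ_N(x̄,R); and ‖x_N(x̄,R) − x*‖^ρ ≤ δ_N(x̄,R)/μ(f). -/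

import Mathlib

/-!
Every first-order fact comes from dividing a chord inequality by `α` and letting `α → 0⁺`.
For the prox steps this says that `x_k` beats every `y ∈ Q_R(x̄)` by `(m/2) ‖y - x_k‖²` with
`m = β μ(d) / R²`; adding the next linear term and paying `L ‖Δx‖ - (m/2) ‖Δx‖² ≤ L² / 2m`
telescopes into the dual-averaging regret bound
`Σ ⟨g_i, x_i - x⟩ ≤ β A(d) + (N+1) L² R² / (2 β μ(d))`, which with `β = γ √(N+1)` is the bound on `δ`. For `f` it gives `f y ≥ f x + ⟨g, y - x⟩ + (μ/2) ‖y - x‖^ρ`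
at a subgradient and `f y ≥ f x* + (μ/2) ‖y - x*‖^ρ` at the minimiser, which add up to
`⟨g_i, x_i - x*⟩ ≥ μ ‖x_i - x*‖^ρ`; averaging (Jensen) gives the other two claims.
-/

open Real Set Filter Topology Metric

section FirstOrder

variable {E : Type*} [AddCommGroup E] [Module ℝ E]

theorem add_le_of_forall_mem_Ioo {a c D : ℝ} {w : ℝ → ℝ} (hw : Tendsto w (𝓝[>] 0) (𝓝 c))
    (h : ∀ α ∈ Ioo (0 : ℝ) 1, α * a + α * (1 - α) * w α ≤ α * D) : a + c ≤ D := by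
  have hlim : Tendsto (fun α => a + (1 - α) * w α) (𝓝[>] 0) (𝓝 (a + c)) := by
    have h1 : Tendsto (fun α : ℝ => 1 - α) (𝓝[>] 0) (𝓝 1) :=
      ((continuous_const.sub continuous_id).tendsto' 0 1 (by simp)).mono_left nhdsWithin_le_nhds
    simpa using tendsto_const_nhds.add (h1.mul hw)
  refine le_of_tendsto hlim ?_
  filter_upwards [Ioo_mem_nhdsGT (zero_lt_one' ℝ)] with α hα
  refine le_of_mul_le_mul_left ?_ hα.1
  linarith [h α hα]

theorem add_le_of_subgradient_of_modulus {S : Set E} (hS : Convex ℝ S) {F : E → ℝ}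
    {ℓ : E →ₗ[ℝ] ℝ} {x y : E} (hx : x ∈ S) (hy : y ∈ S)
    (hℓ : ∀ z ∈ S, F x + ℓ (z - x) ≤ F z) {w : ℝ → ℝ} {c : ℝ}
    (hw : Tendsto w (𝓝[>] 0) (𝓝 c))
    (hF : ∀ α ∈ Ioo (0 : ℝ) 1,
      F (α • y + (1 - α) • x) ≤ α * F y + (1 - α) * F x - α * (1 - α) * w α) :
    F x + ℓ (y - x) + c ≤ F y := by
  suffices ℓ (y - x) + c ≤ F y - F x by linarith
  refine add_le_of_forall_mem_Ioo hw fun α hα => ?_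
  have hz := hℓ _ (hS hy hx hα.1.le (sub_nonneg.2 hα.2.le) (add_sub_cancel α 1))
  have hdir : α • y + (1 - α) • x - x = α • (y - x) := by module
  rw [hdir, map_smul, smul_eq_mul] at hz
  linarith [hF α hα]

end FirstOrder

section Strong

variable {E : Type*} [NormedAddCommGroup E] [NormedSpace ℝ E]

theorem strongConvexOn_of_forall_mem_Icc {s : Set E} (hs : Convex ℝ s) {m : ℝ} {f : E → ℝ}
    (h : ∀ x ∈ s, ∀ y ∈ s, ∀ α ∈ Icc (0 : ℝ) 1,
      f (α • x + (1 - α) • y) ≤ α * f x + (1 - α) * f y - (m / 2) * α * (1 - α) * ‖x - y‖ ^ 2) :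
    StrongConvexOn s m f := by
  refine ⟨hs, fun x hx y hy a b ha hb hab => ?_⟩
  obtain rfl : b = 1 - a := by linarith
  have := h x hx y hy a ⟨ha, by linarith⟩
  simp only [smul_eq_mul]
  linarith

theorem StrongConvexOn.add_le_of_isMinOn {S : Set E} {m : ℝ} {F : E → ℝ}
    (hF : StrongConvexOn S m F) {x y : E} (hx : x ∈ S) (hy : y ∈ S) (hmin : IsMinOn F S x) :
    F x + m / 2 * ‖y - x‖ ^ 2 ≤ F y := by
  have := add_le_of_subgradient_of_modulus hF.1 hx hy (ℓ := 0)
    (fun z hz => by simpa using isMinOn_iff.mp hmin z hz) tendsto_const_nhds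
    (w := fun _ => m / 2 * ‖y - x‖ ^ 2) fun α hα => by
      have := hF.2 hy hx hα.1.le (by linarith [hα.2]) (by ring : α + (1 - α) = 1)
      simp only [smul_eq_mul] at this
      linarith
  simpa using this

theorem smul_sub_mem_closedBall_one {z y : E} {R : ℝ} (hR : 0 < R) (hy : y ∈ closedBall z R) :
    (1 / R) • (y - z) ∈ closedBall (0 : E) 1 := by
  rw [mem_closedBall_zero_iff, norm_smul, norm_div, norm_one, Real.norm_of_nonneg hR.le,
    one_div_mul_eq_div, div_le_one hR]
  exact mem_closedBall_iff_norm.mp hy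

theorem StrongConvexOn.linear_add_mul_comp_affine {d : E → ℝ} {μ : ℝ}
    (hd : StrongConvexOn (closedBall (0 : E) 1) μ d) {z : E} {R b : ℝ} (hR : 0 < R)
    (hb : 0 ≤ b) {S : Set E} (hS : Convex ℝ S) (hSR : S ⊆ closedBall z R) (ℓ : E →L[ℝ] ℝ) :
    StrongConvexOn S (b * μ / R ^ 2) fun y => ℓ (y - z) + b * d ((1 / R) • (y - z)) := by
  refine ⟨hS, fun x hx y hy a a' ha ha' haa' => ?_⟩
  obtain rfl : a' = 1 - a := by linarith
  have hd' := hd.2 (smul_sub_mem_closedBall_one hR (hSR hx))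
    (smul_sub_mem_closedBall_one hR (hSR hy)) ha ha' haa'
  have hcomb : (1 / R) • (a • x + (1 - a) • y - z)
      = a • ((1 / R) • (x - z)) + (1 - a) • ((1 / R) • (y - z)) := by module
  have hdiff : ‖(1 / R) • (x - z) - (1 / R) • (y - z)‖ ^ 2 = ‖x - y‖ ^ 2 / R ^ 2 := by
    rw [← smul_sub, sub_sub_sub_cancel_right, norm_smul, norm_div, norm_one,
      Real.norm_of_nonneg hR.le]
    ring
  have hlin : ℓ (a • x + (1 - a) • y - z) = a * ℓ (x - z) + (1 - a) * ℓ (y - z) := by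
    rw [show a • x + (1 - a) • y - z = a • (x - z) + (1 - a) • (y - z) by module, map_add,
      map_smul, map_smul, smul_eq_mul, smul_eq_mul]
  simp only [smul_eq_mul] at hd' ⊢
  rw [hcomb, hlin]
  rw [hdiff] at hd'
  have := mul_le_mul_of_nonneg_left hd' hb
  field_simp
  field_simp at this
  linarith

end Strong

section UniformlyConvex

variable {E : Type*} [NormedAddCommGroup E] [NormedSpace ℝ E]

/-- Nesterov's uniform convexity of degree `ρ`; for `ρ = 2` it is `μ`-strong convexity. -/
def UniformlyConvexOfDegree (Q : Set E) (ρ μ : ℝ) (f : E → ℝ) : Prop :=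
  ∀ x ∈ Q, ∀ y ∈ Q, ∀ α ∈ Icc (0 : ℝ) 1,
    f (α • x + (1 - α) • y) ≤ α * f x + (1 - α) * f y -
      (μ / 2) * α * (1 - α) * (α ^ (ρ - 1) + (1 - α) ^ (ρ - 1)) * ‖x - y‖ ^ ρ

theorem tendsto_rpow_add_one_sub_rpow {ρ : ℝ} (hρ : 1 < ρ) :
    Tendsto (fun α : ℝ => α ^ (ρ - 1) + (1 - α) ^ (ρ - 1)) (𝓝[>] 0) (𝓝 1) := by
  have hp : 0 ≤ ρ - 1 := by linarith
  have hcont : ContinuousAt (fun α : ℝ => α ^ (ρ - 1) + (1 - α) ^ (ρ - 1)) 0 :=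
    (continuousAt_rpow_const _ _ (Or.inr hp)).add
      ((continuousAt_rpow_const _ _ (Or.inr hp)).comp (continuousAt_const.sub continuousAt_id))
  have h1 := hcont.tendsto.mono_left (nhdsWithin_le_nhds (s := Ioi 0))
  simpa [zero_rpow (sub_pos.2 hρ).ne'] using h1

variable {Q : Set E} {ρ μ : ℝ} {f : E → ℝ}

theorem UniformlyConvexOfDegree.mono {S : Set E} (hf : UniformlyConvexOfDegree Q ρ μ f)
    (hSQ : S ⊆ Q) : UniformlyConvexOfDegree S ρ μ f :=
  fun x hx y hy => hf x (hSQ hx) y (hSQ hy)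

theorem UniformlyConvexOfDegree.convexOn (hf : UniformlyConvexOfDegree Q ρ μ f)
    (hQ : Convex ℝ Q) (hμ : 0 ≤ μ) : ConvexOn ℝ Q f := by
  refine ⟨hQ, fun x hx y hy a b ha hb hab => ?_⟩
  obtain rfl : b = 1 - a := by linarith
  have hslack : 0 ≤ (μ / 2) * a * (1 - a) * (a ^ (ρ - 1) + (1 - a) ^ (ρ - 1)) * ‖x - y‖ ^ ρ := by
    have := rpow_nonneg ha (ρ - 1)
    have := rpow_nonneg hb (ρ - 1)
    have := rpow_nonneg (norm_nonneg (x - y)) ρ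
    positivity
  simp only [smul_eq_mul]
  linarith [hf x hx y hy a ⟨ha, by linarith⟩]

theorem UniformlyConvexOfDegree.add_le_of_subgradient (hf : UniformlyConvexOfDegree Q ρ μ f)
    (hQ : Convex ℝ Q) (hρ : 1 < ρ) {ℓ : E →L[ℝ] ℝ} {x y : E} (hx : x ∈ Q) (hy : y ∈ Q)
    (hℓ : ∀ z ∈ Q, f x + ℓ (z - x) ≤ f z) :
    f x + ℓ (y - x) + μ / 2 * ‖y - x‖ ^ ρ ≤ f y := by
  have hw := ((tendsto_rpow_add_one_sub_rpow hρ).const_mul (μ / 2)).mul_const (‖y - x‖ ^ ρ)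
  rw [mul_one] at hw
  exact add_le_of_subgradient_of_modulus (ℓ := ℓ) hQ hx hy hℓ hw fun α hα => by
    linarith [hf y hy x hx α (Ioo_subset_Icc_self hα)]

theorem UniformlyConvexOfDegree.mul_norm_sub_rpow_le (hf : UniformlyConvexOfDegree Q ρ μ f)
    (hQ : Convex ℝ Q) (hρ : 1 < ρ) {ℓ : E →L[ℝ] ℝ} {x xstar : E} (hx : x ∈ Q)
    (hxstar : xstar ∈ Q) (hmin : IsMinOn f Q xstar) (hℓ : ∀ z ∈ Q, f x + ℓ (z - x) ≤ f z) :
    μ * ‖x - xstar‖ ^ ρ ≤ ℓ (x - xstar) := by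
  have hgrowth := hf.add_le_of_subgradient hQ hρ (ℓ := 0) hxstar hx
    fun z hz => by simpa using isMinOn_iff.mp hmin z hz
  have hsub := hf.add_le_of_subgradient hQ hρ hx hxstar hℓ
  rw [← neg_sub, map_neg, norm_neg] at hsub
  simp only [zero_apply] at hgrowth
  linarith

end UniformlyConvex

section DualAveraging

variable {E : Type*} [NormedAddCommGroup E] [NormedSpace ℝ E]

theorem neg_sq_div_le_apply_add_mul_norm_sq {ℓ : E →L[ℝ] ℝ} {L m : ℝ} (hℓ : ‖ℓ‖ ≤ L)
    (hm : 0 < m) (v : E) : -(L ^ 2 / (2 * m)) ≤ ℓ v + m / 2 * ‖v‖ ^ 2 := by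
  have hv : -(L * ‖v‖) ≤ ℓ v :=
    calc -(L * ‖v‖) ≤ -(‖ℓ‖ * ‖v‖) := neg_le_neg (by gcongr)
      _ ≤ ℓ v := neg_le_of_abs_le (ℓ.le_opNorm v)
  have hsq : 0 ≤ (m * ‖v‖ - L) ^ 2 / (2 * m) := by positivity
  have hexp : (m * ‖v‖ - L) ^ 2 / (2 * m) = m / 2 * ‖v‖ ^ 2 - L * ‖v‖ + L ^ 2 / (2 * m) := by
    field_simp
    ring
  linarith

theorem dual_averaging_regret_le {S : Set E} {h : E → ℝ} {z : E} {m L : ℝ} (hm : 0 < m)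
    {g s : ℕ → E →L[ℝ] ℝ} {xs : ℕ → E} (hs0 : s 0 = 0) (hs : ∀ k, s (k + 1) = s k + g k)
    (hg : ∀ k, ‖g k‖ ≤ L) (hxs : ∀ k, xs k ∈ S)
    (hgrowth : ∀ k, ∀ y ∈ S,
      s k (xs k - z) + h (xs k) + m / 2 * ‖y - xs k‖ ^ 2 ≤ s k (y - z) + h y)
    (n : ℕ) {x : E} (hx : x ∈ S) :
    ∑ i ∈ Finset.range n, g i (xs i - x) ≤ h x - h (xs 0) + n * (L ^ 2 / (2 * m)) := by
  have hstep : ∀ k, s k (xs k - z) + h (xs k) + g k (xs k - z) - L ^ 2 / (2 * m)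
      ≤ s (k + 1) (xs (k + 1) - z) + h (xs (k + 1)) := by
    intro k
    have hsplit : g k (xs (k + 1) - z) = g k (xs k - z) + g k (xs (k + 1) - xs k) := by
      rw [← map_add, sub_add_sub_cancel']
    rw [hs, add_apply, hsplit]
    linarith [hgrowth k _ (hxs (k + 1)),
      neg_sq_div_le_apply_add_mul_norm_sq (hg k) hm (xs (k + 1) - xs k)]
  have htel : ∀ n : ℕ, h (xs 0) + ∑ i ∈ Finset.range n, g i (xs i - z) - n * (L ^ 2 / (2 * m))
      ≤ s n (xs n - z) + h (xs n) := by
    intro n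
    induction n with
    | zero => simp [hs0]
    | succ n ih =>
      rw [Finset.sum_range_succ, Nat.cast_succ]
      linarith [hstep n]
  have hsum : ∀ n v, s n v = ∑ i ∈ Finset.range n, g i v := by
    intro n v
    induction n with
    | zero => simp [hs0]
    | succ n ih => rw [hs, add_apply, ih, Finset.sum_range_succ]
  have hsplit : ∑ i ∈ Finset.range n, g i (xs i - x)
      = ∑ i ∈ Finset.range n, g i (xs i - z) - ∑ i ∈ Finset.range n, g i (x - z) := by
    rw [← Finset.sum_sub_distrib]
    exact Finset.sum_congr rfl fun i _ => by rw [← map_sub, sub_sub_sub_cancel_right]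
  have hgrowth_x := hgrowth n x hx
  rw [hsum n (x - z)] at hgrowth_x
  have : 0 ≤ m / 2 * ‖x - xs n‖ ^ 2 := by positivity
  rw [hsplit]
  linarith [htel n]

theorem dual_averaging_prox_regret_le {d : E → ℝ} {μ A : ℝ} (hμ : 0 < μ)
    (hd : StrongConvexOn (closedBall (0 : E) 1) μ d) (hd0 : d 0 = 0)
    (hdA : ∀ u ∈ closedBall (0 : E) 1, d u ≤ A) {z : E} {R b L : ℝ} (hR : 0 < R) (hb : 0 < b)
    {S : Set E} (hS : Convex ℝ S) (hSR : S ⊆ closedBall z R) {g s : ℕ → E →L[ℝ] ℝ}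
    {xs : ℕ → E} (hs0 : s 0 = 0) (hs : ∀ k, s (k + 1) = s k + g k) (hg : ∀ k, ‖g k‖ ≤ L)
    (hxs : ∀ k, xs k ∈ S) (hx0 : xs 0 = z)
    (hmin : ∀ k, IsMinOn (fun y => s k (y - z) + b * d ((1 / R) • (y - z))) S (xs k))
    (n : ℕ) {x : E} (hx : x ∈ S) :
    ∑ i ∈ Finset.range n, g i (xs i - x) ≤ b * A + n * (L ^ 2 * R ^ 2 / (2 * b * μ)) := by
  have hregret := dual_averaging_regret_le (h := fun y => b * d ((1 / R) • (y - z)))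
    (m := b * μ / R ^ 2) (by positivity) hs0 hs hg hxs
    (fun k y hy => (hd.linear_add_mul_comp_affine hR hb.le hS hSR (s k)).add_le_of_isMinOn
      (hxs k) hy (hmin k)) n hx
  have hA := mul_le_mul_of_nonneg_left (hdA _ (smul_sub_mem_closedBall_one hR (hSR hx))) hb.le
  have hconst : L ^ 2 / (2 * (b * μ / R ^ 2)) = L ^ 2 * R ^ 2 / (2 * b * μ) := by
    field_simp
  simp only [hx0, sub_self, smul_zero, hd0, mul_zero, sub_zero, hconst] at hregret
  linarith

end DualAveraging

section Averaging

variable {ι E : Type*} [NormedAddCommGroup E] [NormedSpace ℝ E] {t : Finset ι} {w : ι → ℝ}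
  {x : ι → E}

theorem norm_sum_smul_sub_rpow_le (hw0 : ∀ i ∈ t, 0 ≤ w i) (hw1 : ∑ i ∈ t, w i = 1) (z : E)
    {p : ℝ} (hp : 1 ≤ p) : ‖∑ i ∈ t, w i • x i - z‖ ^ p ≤ ∑ i ∈ t, w i * ‖x i - z‖ ^ p := by
  have hcenter : ∑ i ∈ t, w i • x i - z = ∑ i ∈ t, w i • (x i - z) := by
    simp only [smul_sub, Finset.sum_sub_distrib, ← Finset.sum_smul, hw1, one_smul]
  have htri : ‖∑ i ∈ t, w i • x i - z‖ ≤ ∑ i ∈ t, w i * ‖x i - z‖ := by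
    rw [hcenter]
    refine (norm_sum_le _ _).trans_eq (Finset.sum_congr rfl fun i hi => ?_)
    rw [norm_smul, Real.norm_of_nonneg (hw0 i hi)]
  calc ‖∑ i ∈ t, w i • x i - z‖ ^ p ≤ (∑ i ∈ t, w i * ‖x i - z‖) ^ p :=
        rpow_le_rpow (norm_nonneg _) htri (by linarith)
    _ ≤ ∑ i ∈ t, w i * ‖x i - z‖ ^ p :=
        rpow_arith_mean_le_arith_mean_rpow _ _ _ hw0 hw1 (fun i _ => norm_nonneg _) hp

theorem ConvexOn.map_sum_smul_sub_le_of_subgradient {S : Set E} {f : E → ℝ}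
    (hf : ConvexOn ℝ S f) (hw0 : ∀ i ∈ t, 0 ≤ w i) (hw1 : ∑ i ∈ t, w i = 1)
    (hx : ∀ i ∈ t, x i ∈ S) {g : ι → E →L[ℝ] ℝ} {z : E}
    (hg : ∀ i ∈ t, f (x i) + g i (z - x i) ≤ f z) :
    f (∑ i ∈ t, w i • x i) - f z ≤ ∑ i ∈ t, w i * g i (x i - z) := by
  have hjensen := hf.map_sum_le hw0 hw1 hx
  have hterm : ∀ i ∈ t, w i • f (x i) ≤ w i * f z + w i * g i (x i - z) := fun i hi => by
    have := hg i hi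
    rw [← neg_sub, map_neg] at this
    rw [smul_eq_mul, ← mul_add]
    exact mul_le_mul_of_nonneg_left (by linarith) (hw0 i hi)
  have hsum := Finset.sum_le_sum hterm
  rw [Finset.sum_add_distrib, ← Finset.sum_mul, hw1, one_mul] at hsum
  linarith

theorem UniformlyConvexOfDegree.mul_norm_sum_smul_sub_rpow_le {Q : Set E} {ρ μ : ℝ}
    {f : E → ℝ} (hf : UniformlyConvexOfDegree Q ρ μ f) (hQ : Convex ℝ Q) (hρ : 1 < ρ)
    (hμ : 0 ≤ μ) (hw0 : ∀ i ∈ t, 0 ≤ w i) (hw1 : ∑ i ∈ t, w i = 1) (hx : ∀ i ∈ t, x i ∈ Q)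
    {xstar : E} (hxstar : xstar ∈ Q) (hmin : IsMinOn f Q xstar) {g : ι → E →L[ℝ] ℝ}
    (hg : ∀ i ∈ t, ∀ y ∈ Q, f (x i) + g i (y - x i) ≤ f y) :
    μ * ‖∑ i ∈ t, w i • x i - xstar‖ ^ ρ ≤ ∑ i ∈ t, w i * g i (x i - xstar) := by
  calc μ * ‖∑ i ∈ t, w i • x i - xstar‖ ^ ρ ≤ μ * ∑ i ∈ t, w i * ‖x i - xstar‖ ^ ρ :=
        mul_le_mul_of_nonneg_left (norm_sum_smul_sub_rpow_le hw0 hw1 xstar hρ.le) hμ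
    _ = ∑ i ∈ t, w i * (μ * ‖x i - xstar‖ ^ ρ) := by
        rw [Finset.mul_sum]; exact Finset.sum_congr rfl fun i _ => by ring
    _ ≤ ∑ i ∈ t, w i * g i (x i - xstar) := Finset.sum_le_sum fun i hi =>
        mul_le_mul_of_nonneg_left
          (hf.mul_norm_sub_rpow_le hQ hρ (hx i hi) hxstar hmin (hg i hi)) (hw0 i hi)

end Averaging

theorem one_div_mul_constant_gain_bound {n γ μ A K : ℝ} (hn : 0 < n) :
    1 / n * (γ * √n * A + n * (K / (2 * (γ * √n) * μ))) = 1 / √n * (γ * A + K / (2 * γ * μ)) := by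
  obtain ⟨u, hu0, rfl⟩ : ∃ u, 0 < u ∧ n = u ^ 2 := ⟨√n, by positivity, (sq_sqrt hn.le).symm⟩
  rw [sqrt_sq hu0.le]
  field_simp

theorem dual_averaging_uniformly_convex_general
    {E : Type*} [NormedAddCommGroup E] [NormedSpace ℝ E]
    (Q : Set E) (hQconv : Convex ℝ Q)
    (d : E → ℝ) (μd A : ℝ) (hμd : 0 < μd)
    (hd_sc : ∀ x ∈ Metric.closedBall (0 : E) 1, ∀ y ∈ Metric.closedBall (0 : E) 1,
      ∀ α ∈ Set.Icc (0 : ℝ) 1,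
      d (α • x + (1 - α) • y) ≤
        α * d x + (1 - α) * d y - (μd / 2) * α * (1 - α) * ‖x - y‖ ^ 2)
    (hd0 : d 0 = 0)
    (hd_nonneg : ∀ x ∈ Metric.closedBall (0 : E) 1, 0 ≤ d x)
    (hdA : ∀ x ∈ Metric.closedBall (0 : E) 1, d x ≤ A)
    (f : E → ℝ) (ρ μf : ℝ) (hρ : 2 ≤ ρ) (hμf : 0 < μf)
    (huc : ∀ x ∈ Q, ∀ y ∈ Q, ∀ α ∈ Set.Icc (0 : ℝ) 1,
      f (α • x + (1 - α) • y) ≤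
        α * f x + (1 - α) * f y -
          (μf / 2) * α * (1 - α) * (α ^ (ρ - 1) + (1 - α) ^ (ρ - 1)) * ‖x - y‖ ^ ρ)
    (L : ℝ)
    (hL : ∀ x ∈ Q, ∀ g : E →L[ℝ] ℝ, (∀ y ∈ Q, f x + g (y - x) ≤ f y) → ‖g‖ ≤ L)
    (xbar : E) (hxbar : xbar ∈ Q) (R : ℝ) (hR : 0 < R)
    (xstar : E) (hxstarQ : xstar ∈ Q ∩ Metric.closedBall xbar R)
    (hxstar : ∀ y ∈ Q ∩ Metric.closedBall xbar R, f xstar ≤ f y)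
    (N : ℕ) (γ : ℝ) (hγ : 0 < γ)
    (β : ℕ → ℝ) (hβ : ∀ i, β i = γ * Real.sqrt ((N : ℝ) + 1))
    (xs : ℕ → E) (g : ℕ → E →L[ℝ] ℝ) (s : ℕ → E →L[ℝ] ℝ)
    (hx0 : xs 0 = xbar) (hs0 : s 0 = 0)
    (hsub : ∀ i, ∀ y ∈ Q, f (xs i) + (g i) (y - xs i) ≤ f y)
    (hsrec : ∀ i, s (i + 1) = s i + g i)
    (hxrec : ∀ i, xs (i + 1) ∈ Q ∩ Metric.closedBall xbar R ∧
      ∀ y ∈ Q ∩ Metric.closedBall xbar R,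
        (-(s (i + 1))) (y - xbar) - β (i + 1) * d ((1 / R) • (y - xbar)) ≤
          (-(s (i + 1))) (xs (i + 1) - xbar)
            - β (i + 1) * d ((1 / R) • (xs (i + 1) - xbar)))
    (xN : E) (hxN : xN = (1 / ((N : ℝ) + 1)) • ∑ i ∈ Finset.range (N + 1), xs i)
    (δ : ℝ)
    (hδ : IsGreatest
      ((fun x => (1 / ((N : ℝ) + 1)) * ∑ i ∈ Finset.range (N + 1), (g i) (xs i - x)) ''
        (Q ∩ Metric.closedBall xbar R)) δ) :
    δ ≤ (1 / Real.sqrt ((N : ℝ) + 1)) * (γ * A + L ^ 2 * R ^ 2 / (2 * γ * μd)) ∧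
    f xN - f xstar ≤ δ ∧
    ‖xN - xstar‖ ^ ρ ≤ δ / μf := by
  set S := Q ∩ closedBall xbar R
  set b := γ * √((N : ℝ) + 1)
  have hS : Convex ℝ S := hQconv.inter (convex_closedBall xbar R)
  have hb : 0 < b := by positivity
  have hmem : ∀ k, xs k ∈ S
    | 0 => hx0 ▸ ⟨hxbar, mem_closedBall_self hR.le⟩
    | k + 1 => (hxrec k).1
  have hmin : ∀ k,
      IsMinOn (fun y => s k (y - xbar) + b * d ((1 / R) • (y - xbar))) S (xs k) := by
    rintro (_ | k) <;> refine isMinOn_iff.mpr fun y hy => ?_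
    · simpa [hx0, hs0, hd0] using
        mul_nonneg hb.le (hd_nonneg _ (smul_sub_mem_closedBall_one hR hy.2))
    · have := (hxrec k).2 y hy
      simp only [hβ, neg_apply] at this
      linarith
  have hf : UniformlyConvexOfDegree S ρ μf f := UniformlyConvexOfDegree.mono huc inter_subset_left
  have hw0 : ∀ i ∈ Finset.range (N + 1), (0 : ℝ) ≤ 1 / ((N : ℝ) + 1) := fun _ _ => by positivity
  have hw1 : ∑ _i ∈ Finset.range (N + 1), 1 / ((N : ℝ) + 1) = 1 := by
    rw [Finset.sum_const, Finset.card_range, nsmul_eq_mul, Nat.cast_succ]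
    field_simp
  have hxN' : xN = ∑ i ∈ Finset.range (N + 1), (1 / ((N : ℝ) + 1)) • xs i := by
    rw [hxN, Finset.smul_sum]
  have hgap : ∑ i ∈ Finset.range (N + 1), 1 / ((N : ℝ) + 1) * g i (xs i - xstar) ≤ δ := by
    rw [← Finset.mul_sum]
    exact hδ.2 ⟨xstar, hxstarQ, rfl⟩
  refine ⟨?_, ?_, ?_⟩
  · obtain ⟨x, hx, rfl⟩ := hδ.1
    calc 1 / ((N : ℝ) + 1) * ∑ i ∈ Finset.range (N + 1), g i (xs i - x)
        ≤ 1 / ((N : ℝ) + 1) * (b * A + (N + 1 : ℕ) * (L ^ 2 * R ^ 2 / (2 * b * μd))) := by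
          gcongr
          exact dual_averaging_prox_regret_le hμd
            (strongConvexOn_of_forall_mem_Icc (convex_closedBall 0 1) hd_sc) hd0 hdA hR hb hS
            inter_subset_right hs0 hsrec (fun k => hL _ (hmem k).1 _ (hsub k)) hmem hx0 hmin
            (N + 1) hx
      _ = _ := by
          push_cast
          exact one_div_mul_constant_gain_bound (by positivity)
  · have := (hf.convexOn hS hμf.le).map_sum_smul_sub_le_of_subgradient hw0 hw1
      (fun i _ => hmem i) fun i _ => hsub i xstar hxstarQ.1
    rw [← hxN'] at this
    linarith
  · rw [le_div_iff₀ hμf, mul_comm, hxN']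
    exact (hf.mul_norm_sum_smul_sub_rpow_le hS (by linarith) hμf.le hw0 hw1 (fun i _ => hmem i)
      hxstarQ (isMinOn_iff.mpr hxstar) fun i _ y hy => hsub i y hy.1).trans hgap

/-- Lemma 3.1. Dual averaging with unit stepsizes and constant
gain `β i = γ √(N+1)` applied to a uniformly convex function `f` (parameters
`ρ ≥ 2`, `μf > 0`) whose subgradients on `Q` are bounded by `L` in dual norm.
`δ` is the gap value, `xN` the averaged iterate, `xstar` a minimizer of `f`
over `Q ∩ B_R(x̄)`. -/
theorem dual_averaging_uniformly_convex
    {E : Type*} [NormedAddCommGroup E] [NormedSpace ℝ E] [FiniteDimensional ℝ E]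
    (Q : Set E) (hQc : IsClosed Q) (hQconv : Convex ℝ Q)
    (d : E → ℝ) (μd A : ℝ) (hμd : 0 < μd)
    (hd_cont : ContinuousOn d (Metric.closedBall (0 : E) 1))
    (hd_sc : ∀ x ∈ Metric.closedBall (0 : E) 1, ∀ y ∈ Metric.closedBall (0 : E) 1,
      ∀ α ∈ Set.Icc (0 : ℝ) 1,
      d (α • x + (1 - α) • y) ≤
        α * d x + (1 - α) * d y - (μd / 2) * α * (1 - α) * ‖x - y‖ ^ 2)
    (hd0 : d 0 = 0)
    (hd_nonneg : ∀ x ∈ Metric.closedBall (0 : E) 1, 0 ≤ d x)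
    (hdA : ∀ x ∈ Metric.closedBall (0 : E) 1, d x ≤ A)
    (f : E → ℝ) (ρ μf : ℝ) (hρ : 2 ≤ ρ) (hμf : 0 < μf)
    (huc : ∀ x ∈ Q, ∀ y ∈ Q, ∀ α ∈ Set.Icc (0 : ℝ) 1,
      f (α • x + (1 - α) • y) ≤
        α * f x + (1 - α) * f y -
          (μf / 2) * α * (1 - α) * (α ^ (ρ - 1) + (1 - α) ^ (ρ - 1)) * ‖x - y‖ ^ ρ)
    (L : ℝ)
    (hL : ∀ x ∈ Q, ∀ g : E →L[ℝ] ℝ, (∀ y ∈ Q, f x + g (y - x) ≤ f y) → ‖g‖ ≤ L)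
    (xbar : E) (hxbar : xbar ∈ Q) (R : ℝ) (hR : 0 < R)
    (xstar : E) (hxstarQ : xstar ∈ Q ∩ Metric.closedBall xbar R)
    (hxstar : ∀ y ∈ Q ∩ Metric.closedBall xbar R, f xstar ≤ f y)
    (N : ℕ) (γ : ℝ) (hγ : 0 < γ)
    (β : ℕ → ℝ) (hβ : ∀ i, β i = γ * Real.sqrt ((N : ℝ) + 1))
    (xs : ℕ → E) (g : ℕ → E →L[ℝ] ℝ) (s : ℕ → E →L[ℝ] ℝ)
    (hx0 : xs 0 = xbar) (hs0 : s 0 = 0)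
    (hsub : ∀ i, ∀ y ∈ Q, f (xs i) + (g i) (y - xs i) ≤ f y)
    (hsrec : ∀ i, s (i + 1) = s i + g i)
    (hxrec : ∀ i, xs (i + 1) ∈ Q ∩ Metric.closedBall xbar R ∧
      ∀ y ∈ Q ∩ Metric.closedBall xbar R,
        (-(s (i + 1))) (y - xbar) - β (i + 1) * d ((1 / R) • (y - xbar)) ≤
          (-(s (i + 1))) (xs (i + 1) - xbar)
            - β (i + 1) * d ((1 / R) • (xs (i + 1) - xbar)))
    (xN : E) (hxN : xN = (1 / ((N : ℝ) + 1)) • ∑ i ∈ Finset.range (N + 1), xs i)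
    (δ : ℝ)
    (hδ : IsGreatest
      ((fun x => (1 / ((N : ℝ) + 1)) * ∑ i ∈ Finset.range (N + 1), (g i) (xs i - x)) ''
        (Q ∩ Metric.closedBall xbar R)) δ) :
    δ ≤ (1 / Real.sqrt ((N : ℝ) + 1)) * (γ * A + L ^ 2 * R ^ 2 / (2 * γ * μd)) ∧
    f xN - f xstar ≤ δ ∧
    ‖xN - xstar‖ ^ ρ ≤ δ / μf :=
  dual_averaging_uniformly_convex_general Q hQconv d μd A hμd hd_sc hd0 hd_nonneg hdA f ρ μf hρ hμf
    huc L hL xbar hxbar R hR xstar hxstarQ hxstar N γ hγ β hβ xs g s hx0 hs0 hsub hsrec hxrec xN hxN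
    δ hδ
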